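/- arXiv:1810.12037 — 4 statements merged into one kernel-verified Lean document; each statement's English description precedes it below -/
import Mathlib

section
/- Let L be a finite-dimensional complex Lie algebra with a nondegenerate symmetric ℂ-bilinear form B, and let g and g̃ both be real slices of (L,B). Then there exists a Cartan involution of Lie algebras of the restriction of B to g if and only if there exists a Cartan involution of Lie algebras of the restriction of B to g̃. -/
/-!
Setup: a finite-dimensional complex Lie algebra `L` with a nondegenerate symmetric
`ℂ`-bilinear form `B` (a "holomorphic inner product"), viewed also as a real Lie algebra.
-/

variable {L : Type*} [LieRing L] [LieAlgebra ℂ L]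

/-- A complex Lie algebra is in particular a real Lie algebra. -/
noncomputable instance instLieAlgebraRealOfComplex : LieAlgebra ℝ L :=
  { (inferInstance : Module ℝ L) with
    lie_smul := fun t x y => by
      rw [show t • y = (t : ℂ) • y from rfl, lie_smul,
        show (t : ℂ) • ⁅x, y⁆ = t • ⁅x, y⁆ from rfl] }

/-- `g` is a real form of the complex Lie algebra `L`:
`g ∩ i • g = {0}` and `g + i • g = L`. -/
def IsRealForm (g : LieSubalgebra ℝ L) : Prop :=
  (∀ x ∈ g, ∀ y ∈ g, x = Complex.I • y → x = 0) ∧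
  (∀ z : L, ∃ x ∈ g, ∃ y ∈ g, z = x + Complex.I • y)

/-- `g` is a real slice of `(L, B)`: a real form of `L` on which `B` is real-valued. -/
def IsRealSlice (B : LinearMap.BilinForm ℂ L) (g : LieSubalgebra ℝ L) : Prop :=
  IsRealForm g ∧ ∀ x ∈ g, ∀ y ∈ g, (B x y).im = 0

/-- A compact real form of `(L, B)`: a real slice on which `B` is positive definite. -/
def IsCompactRealForm (B : LinearMap.BilinForm ℂ L) (u : LieSubalgebra ℝ L) : Prop :=
  IsRealSlice B u ∧ ∀ x ∈ u, x ≠ 0 → 0 < (B x x).re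

/-- A Cartan involution of the metric `B|g`: an `ℝ`-linear involution `θ` of `g` such that
`(x, y) ↦ B x (θ y)` is a positive-definite (real-valued, symmetric) inner product on `g`. -/
def IsCartanInvolutionOfMetric (B : LinearMap.BilinForm ℂ L) (g : LieSubalgebra ℝ L)
    (θ : ↥g →ₗ[ℝ] ↥g) : Prop :=
  (∀ x, θ (θ x) = x) ∧
  (∀ x y : ↥g, B (θ x : L) (y : L) = B (x : L) (θ y : L)) ∧
  (∀ x : ↥g, x ≠ 0 → 0 < (B (x : L) (θ x : L)).re)

/-- A Cartan involution of Lie algebras of the metric `B|g`: a Cartan involution of the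
metric which is moreover a Lie algebra automorphism of `g`. -/
def IsCartanInvolutionOfLieAlgebras (B : LinearMap.BilinForm ℂ L) (g : LieSubalgebra ℝ L)
    (θ : ↥g →ₗ[ℝ] ↥g) : Prop :=
  IsCartanInvolutionOfMetric B g θ ∧ ∀ x y : ↥g, θ ⁅x, y⁆ = ⁅θ x, θ y⁆

/-!
A Cartan involution `θ` of a real slice `g` extends conjugate-linearly, `a + i b ↦ θ a - i θ b`,
to a *compact conjugation* `τ` of `L`: an involutive automorphism of the real Lie algebra with
`B (τ x) (τ y) = conj (B x y)` and `x ↦ Re B(x, τ x)` positive definite. Conversely, a compact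
conjugation commuting with the conjugation `σ` of `L` with respect to a real slice `g'` preserves
`g'` and restricts to a Cartan involution of it.

So it suffices to make `τ` commute with `σ`. The operator `P = (σ τ)²` is self-adjoint and
positive definite for the inner product `Re B(x, τ y)`, preserves the bracket and `B`, and
satisfies `P σ P = σ`, `P τ P = τ`. Hence so do its real powers `Pᵗ`, which are computed in an
eigenbasis, and `σ` and `τ` both invert them; then `τ' = P^{1/4} τ P^{-1/4}` is a compact
conjugation with `σ τ' = P^{-1/2} σ τ = P^{1/2} τ σ = τ' σ`.
-/

namespace Module.Basis

variable {E ι : Type*} [AddCommGroup E] [Module ℝ E] [Fintype ι] [DecidableEq ι]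
  (b : Basis ι ℝ E) {μ : ι → ℝ}

noncomputable def diagRpow (μ : ι → ℝ) (t : ℝ) : E →ₗ[ℝ] E :=
  Matrix.toLin b b (Matrix.diagonal fun i => μ i ^ t)

theorem repr_diagRpow (t : ℝ) (x : E) (i : ι) :
    b.repr (b.diagRpow μ t x) i = μ i ^ t * b.repr x i := by
  rw [diagRpow, ← LinearMap.toMatrix_mulVec_repr b b, LinearMap.toMatrix_toLin,
    Matrix.mulVec_diagonal]

theorem diagRpow_basis (t : ℝ) (i : ι) : b.diagRpow μ t (b i) = μ i ^ t • b i :=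
  b.ext_elem fun j => by
    rw [repr_diagRpow, map_smul, repr_self, Finsupp.smul_apply, Finsupp.single_apply,
      smul_eq_mul]
    split_ifs with h <;> simp [h]

theorem diagRpow_zero (x : E) : b.diagRpow μ 0 x = x :=
  b.ext_elem fun i => by rw [repr_diagRpow, Real.rpow_zero, one_mul]

theorem diagRpow_diagRpow (hμ : ∀ i, 0 < μ i) (s t : ℝ) (x : E) :
    b.diagRpow μ s (b.diagRpow μ t x) = b.diagRpow μ (s + t) x :=
  b.ext_elem fun i => by simp only [repr_diagRpow, Real.rpow_add (hμ i), mul_assoc]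

variable {P : E →ₗ[ℝ] E}

theorem diagRpow_one (hP : ∀ i, P (b i) = μ i • b i) : b.diagRpow μ 1 = P :=
  b.ext fun i => by rw [diagRpow_basis, Real.rpow_one, hP]

theorem diagRpow_apply_of_eq_smul (hP : ∀ i, P (b i) = μ i • b i) (t : ℝ) {c : ℝ} {x : E}
    (hx : P x = c • x) : b.diagRpow μ t x = c ^ t • x := by
  refine b.ext_elem fun i => ?_
  have hi : μ i * b.repr x i = c * b.repr x i := by
    have h1 := b.repr_diagRpow (μ := μ) 1 x i
    rwa [Real.rpow_one, diagRpow_one b hP, hx, map_smul, Finsupp.smul_apply, smul_eq_mul,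
      eq_comm] at h1
  rw [repr_diagRpow, map_smul, Finsupp.smul_apply, smul_eq_mul]
  rcases eq_or_ne (b.repr x i) 0 with h | h
  · simp [h]
  · rw [mul_right_cancel₀ h hi]

theorem diagRpow_map_bilin (hP : ∀ i, P (b i) = μ i • b i) (hμ : ∀ i, 0 < μ i)
    {F : E →ₗ[ℝ] E →ₗ[ℝ] E} (hF : ∀ x y, P (F x y) = F (P x) (P y)) (t : ℝ) (x y : E) :
    b.diagRpow μ t (F x y) = F (b.diagRpow μ t x) (b.diagRpow μ t y) := by
  suffices F.compr₂ (b.diagRpow μ t) = (F ∘ₗ b.diagRpow μ t).compl₂ (b.diagRpow μ t) from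
    LinearMap.congr_fun₂ this x y
  refine LinearMap.ext_basis b b fun i j => ?_
  have hij : P (F (b i) (b j)) = (μ i * μ j) • F (b i) (b j) := by
    rw [hF, hP, hP, map_smul, map_smul, LinearMap.smul_apply, smul_smul, mul_comm]
  simp only [LinearMap.compr₂_apply, LinearMap.compl₂_apply, LinearMap.comp_apply,
    diagRpow_basis, diagRpow_apply_of_eq_smul b hP t hij, map_smul, LinearMap.smul_apply,
    smul_smul, Real.mul_rpow (hμ i).le (hμ j).le, mul_comm]

theorem bilin_diagRpow_diagRpow (hP : ∀ i, P (b i) = μ i • b i) (hμ : ∀ i, 0 < μ i)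
    {N : Type*} [AddCommGroup N] [Module ℝ N] {F : E →ₗ[ℝ] E →ₗ[ℝ] N}
    (hF : ∀ x y, F (P x) (P y) = F x y) (t : ℝ) (x y : E) :
    F (b.diagRpow μ t x) (b.diagRpow μ t y) = F x y := by
  suffices (F ∘ₗ b.diagRpow μ t).compl₂ (b.diagRpow μ t) = F from LinearMap.congr_fun₂ this x y
  refine LinearMap.ext_basis b b fun i j => ?_
  have hij : (μ i * μ j) • F (b i) (b j) = F (b i) (b j) := by
    have h1 := hF (b i) (b j)
    rwa [hP, hP, map_smul, map_smul, LinearMap.smul_apply, smul_smul, mul_comm] at h1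
  simp only [LinearMap.compl₂_apply, LinearMap.comp_apply, diagRpow_basis, map_smul,
    LinearMap.smul_apply, smul_smul]
  rcases eq_or_ne (F (b i) (b j)) 0 with h | h
  · rw [h, smul_zero]
  · have h1 : μ i * μ j = 1 := smul_left_injective ℝ h (hij.trans (one_smul ℝ _).symm)
    rw [mul_comm, ← Real.mul_rpow (hμ i).le (hμ j).le, h1, Real.one_rpow, one_smul]

theorem map_diagRpow_eq_diagRpow_neg_map (hP : ∀ i, P (b i) = μ i • b i) (hμ : ∀ i, 0 < μ i)
    {C : E →ₗ[ℝ] E} (hC : ∀ x, P (C (P x)) = C x) (t : ℝ) (x : E) :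
    C (b.diagRpow μ t x) = b.diagRpow μ (-t) (C x) := by
  suffices C ∘ₗ b.diagRpow μ t = b.diagRpow μ (-t) ∘ₗ C from LinearMap.congr_fun this x
  refine b.ext fun i => ?_
  have hi : P (C (b i)) = (μ i)⁻¹ • C (b i) := by
    rw [eq_inv_smul_iff₀ (hμ i).ne', ← map_smul, ← map_smul, ← hP, hC]
  rw [LinearMap.comp_apply, LinearMap.comp_apply, diagRpow_basis, map_smul,
    diagRpow_apply_of_eq_smul b hP _ hi, Real.inv_rpow (hμ i).le, ← Real.rpow_neg (hμ i).le,
    neg_neg]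

end Module.Basis

theorem exists_eigenbasis_pos_of_symmetric {E : Type*} [AddCommGroup E] [Module ℝ E]
    [FiniteDimensional ℝ E] (G : LinearMap.BilinForm ℝ E) (hG : ∀ x y, G x y = G y x)
    (hGpos : ∀ x, x ≠ 0 → 0 < G x x) {P : E →ₗ[ℝ] E} (hP : ∀ x y, G (P x) y = G x (P y))
    (hPpos : ∀ x, x ≠ 0 → 0 < G x (P x)) :
    ∃ (n : ℕ) (b : Module.Basis (Fin n) ℝ E) (μ : Fin n → ℝ),
      (∀ i, P (b i) = μ i • b i) ∧ ∀ i, 0 < μ i := by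
  let core : InnerProductSpace.Core ℝ E :=
    { inner := fun x y => G x y
      conj_inner_symm := fun x y => hG y x
      re_inner_nonneg := fun x => by
        rcases eq_or_ne x 0 with rfl | hx
        · simp
        · exact (hGpos x hx).le
      add_left := fun x y z => by simp
      smul_left := fun x y r => by simp
      definite := fun x hx => by
        by_contra h
        exact (hGpos x h).ne' hx }
  let : NormedAddCommGroup E := core.toNormedAddCommGroup
  let : InnerProductSpace ℝ E := InnerProductSpace.ofCore core.toCore
  have hsymm : P.IsSymmetric := hP
  set v := hsymm.eigenvectorBasis rfl
  have hv : ∀ i, P (v i) = hsymm.eigenvalues rfl i • v i := fun i => by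
    exact_mod_cast hsymm.apply_eigenvectorBasis rfl i
  refine ⟨_, v.toBasis, hsymm.eigenvalues rfl, by simpa using hv, fun i => ?_⟩
  have hvi : v i ≠ 0 := v.orthonormal.ne_zero i
  have h1 := hPpos _ hvi
  rw [hv, map_smul, smul_eq_mul] at h1
  exact (mul_pos_iff_of_pos_right (hGpos _ hvi)).mp h1

namespace LieSubalgebra

variable {g : LieSubalgebra ℝ L}

theorem lie_coe_add_I_smul (a b c d : g) :
    ⁅(a : L) + Complex.I • (b : L), (c : L) + Complex.I • (d : L)⁆ =
      ((⁅a, c⁆ - ⁅b, d⁆ : g) : L) + Complex.I • ((⁅a, d⁆ + ⁅b, c⁆ : g) : L) := by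
  push_cast
  simp only [lie_add, add_lie, lie_smul, smul_lie, smul_smul, Complex.I_mul_I, smul_add,
    neg_one_smul]
  abel

end LieSubalgebra

namespace IsRealForm

variable {g : LieSubalgebra ℝ L}

theorem exists_add_I_smul (hg : IsRealForm g) (x : L) :
    ∃ a b : g, (a : L) + Complex.I • (b : L) = x := by
  obtain ⟨a, ha, b, hb, rfl⟩ := hg.2 x
  exact ⟨⟨a, ha⟩, ⟨b, hb⟩, rfl⟩

theorem eq_zero_of_add_I_smul_eq_zero (hg : IsRealForm g) {a b : g}
    (h : (a : L) + Complex.I • (b : L) = 0) : a = 0 ∧ b = 0 := by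
  have ha : a = 0 := by
    refine Subtype.ext (hg.1 _ a.2 _ (-b).2 ?_)
    rw [NegMemClass.coe_neg, smul_neg, eq_neg_iff_add_eq_zero, h]
  refine ⟨ha, (LieSubalgebra.coe_zero_iff_zero _ _).mp ?_⟩
  rw [ha, ZeroMemClass.coe_zero, zero_add] at h
  exact (smul_eq_zero.mp h).resolve_left Complex.I_ne_zero

noncomputable def equivProd (hg : IsRealForm g) : (g × g) ≃ₗ[ℝ] L :=
  LinearEquiv.ofBijective ((g.incl : g →ₗ[ℝ] L).coprod (Complex.I • (g.incl : g →ₗ[ℝ] L)))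
    ⟨LinearMap.ker_eq_bot.mp <| LinearMap.ker_eq_bot'.mpr fun _ hp =>
        Prod.ext_iff.mpr (hg.eq_zero_of_add_I_smul_eq_zero hp),
      fun x => by
        obtain ⟨a, b, rfl⟩ := hg.exists_add_I_smul x
        exact ⟨(a, b), rfl⟩⟩

theorem equivProd_symm_apply (hg : IsRealForm g) (a b : g) :
    hg.equivProd.symm ((a : L) + Complex.I • (b : L)) = (a, b) :=
  hg.equivProd.symm_apply_eq.mpr rfl

theorem equivProd_apply (hg : IsRealForm g) (p : g × g) :
    hg.equivProd p = (p.1 : L) + Complex.I • (p.2 : L) :=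
  rfl

noncomputable def conjExtend (hg : IsRealForm g) (f : g →ₗ[ℝ] g) : L →ₗ[ℝ] L :=
  hg.equivProd.toLinearMap ∘ₗ f.prodMap (-f) ∘ₗ hg.equivProd.symm.toLinearMap

theorem conjExtend_apply (hg : IsRealForm g) (f : g →ₗ[ℝ] g) (a b : g) :
    hg.conjExtend f ((a : L) + Complex.I • (b : L)) = (f a : L) - Complex.I • (f b : L) := by
  simp only [conjExtend, LinearMap.comp_apply, LinearEquiv.coe_coe, equivProd_symm_apply,
    LinearMap.prodMap_apply, LinearMap.neg_apply]
  rw [equivProd_apply, NegMemClass.coe_neg, smul_neg, sub_eq_add_neg]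

theorem conjExtend_conjExtend (hg : IsRealForm g) {f : g →ₗ[ℝ] g} (hf : ∀ v, f (f v) = v)
    (x : L) : hg.conjExtend f (hg.conjExtend f x) = x := by
  obtain ⟨a, b, rfl⟩ := hg.exists_add_I_smul x
  rw [conjExtend_apply, sub_eq_add_neg, ← smul_neg, ← NegMemClass.coe_neg, conjExtend_apply]
  simp [hf]

theorem conjExtend_lie (hg : IsRealForm g) {f : g →ₗ[ℝ] g}
    (hf : ∀ v w, f ⁅v, w⁆ = ⁅f v, f w⁆) (x y : L) :
    hg.conjExtend f ⁅x, y⁆ = ⁅hg.conjExtend f x, hg.conjExtend f y⁆ := by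
  obtain ⟨a, b, rfl⟩ := hg.exists_add_I_smul x
  obtain ⟨c, d, rfl⟩ := hg.exists_add_I_smul y
  rw [LieSubalgebra.lie_coe_add_I_smul, conjExtend_apply, conjExtend_apply, conjExtend_apply]
  simp only [map_sub, map_add, hf]
  push_cast
  simp only [sub_lie, lie_sub, lie_smul, smul_lie, smul_sub, smul_add, smul_smul, Complex.I_mul_I,
    neg_one_smul]
  abel

noncomputable def conj (hg : IsRealForm g) : L →ₗ[ℝ] L := hg.conjExtend LinearMap.id

theorem conj_apply_of_mem (hg : IsRealForm g) {x : L} (hx : x ∈ g) : hg.conj x = x := by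
  simpa [conj] using hg.conjExtend_apply LinearMap.id ⟨x, hx⟩ 0

theorem mem_of_conj_eq (hg : IsRealForm g) {x : L} (hx : hg.conj x = x) : x ∈ g := by
  obtain ⟨a, b, rfl⟩ := hg.exists_add_I_smul x
  have hb : (2 * Complex.I) • (b : L) = 0 := by
    rw [conj, conjExtend_apply, LinearMap.id_apply, LinearMap.id_apply] at hx
    linear_combination (norm := module) -hx
  have hb0 : (b : L) = 0 := (smul_eq_zero.mp hb).resolve_left (by simp)
  simp [hb0]

end IsRealForm

structure IsConjugation (B : LinearMap.BilinForm ℂ L) (σ : L →ₗ[ℝ] L) : Prop where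
  involutive : ∀ x, σ (σ x) = x
  map_lie : ∀ x y, σ ⁅x, y⁆ = ⁅σ x, σ y⁆
  map_bilin : ∀ x y, B (σ x) (σ y) = starRingEnd ℂ (B x y)

structure IsCompactConjugation (B : LinearMap.BilinForm ℂ L) (τ : L →ₗ[ℝ] L) : Prop
    extends IsConjugation B τ where
  re_bilin_pos : ∀ x, x ≠ 0 → 0 < (B x (τ x)).re

theorem IsConjugation.bilin_apply_left {B : LinearMap.BilinForm ℂ L} {σ : L →ₗ[ℝ] L}
    (hσ : IsConjugation B σ) (x y : L) : B (σ x) y = starRingEnd ℂ (B x (σ y)) := by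
  rw [← hσ.map_bilin, hσ.involutive]

namespace IsRealSlice

variable {B : LinearMap.BilinForm ℂ L} {g : LieSubalgebra ℝ L}

theorem bilin_conjExtend (hg : IsRealSlice B g) {f : g →ₗ[ℝ] g}
    (hf : ∀ u v, B (f u) (f v) = B u v) (x y : L) :
    B (hg.1.conjExtend f x) (hg.1.conjExtend f y) = starRingEnd ℂ (B x y) := by
  have hreal (u v : g) : starRingEnd ℂ (B u v) = B u v :=
    Complex.conj_eq_iff_im.2 (hg.2 _ u.2 _ v.2)
  obtain ⟨a, b, rfl⟩ := hg.1.exists_add_I_smul x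
  obtain ⟨c, d, rfl⟩ := hg.1.exists_add_I_smul y
  rw [IsRealForm.conjExtend_apply, IsRealForm.conjExtend_apply]
  simp only [map_sub, map_add, map_smul, LinearMap.sub_apply, LinearMap.add_apply,
    LinearMap.smul_apply, smul_eq_mul, hf, map_mul, Complex.conj_I, hreal]
  ring

theorem isConjugation_conj (hg : IsRealSlice B g) : IsConjugation B hg.1.conj where
  involutive := hg.1.conjExtend_conjExtend fun _ => rfl
  map_lie := hg.1.conjExtend_lie fun _ _ => rfl
  map_bilin := hg.bilin_conjExtend fun _ _ => rfl

end IsRealSlice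

theorem IsCartanInvolutionOfLieAlgebras.isCompactConjugation {B : LinearMap.BilinForm ℂ L}
    {g : LieSubalgebra ℝ L} {θ : g →ₗ[ℝ] g} (hBsymm : ∀ x y : L, B x y = B y x)
    (hg : IsRealSlice B g) (hθ : IsCartanInvolutionOfLieAlgebras B g θ) :
    IsCompactConjugation B (hg.1.conjExtend θ) := by
  obtain ⟨⟨hinv, hsym, hpos⟩, hlie⟩ := hθ
  refine ⟨⟨hg.1.conjExtend_conjExtend hinv, hg.1.conjExtend_lie hlie,
    hg.bilin_conjExtend fun u v => by rw [hsym, hinv]⟩, fun x hx => ?_⟩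
  obtain ⟨a, b, rfl⟩ := hg.1.exists_add_I_smul x
  have hcross : B b (θ a) = B a (θ b) := by rw [hBsymm, hsym]
  have hsplit : B ((a : L) + Complex.I • (b : L)) (hg.1.conjExtend θ (a + Complex.I • b)) =
      B a (θ a) + B b (θ b) := by
    rw [IsRealForm.conjExtend_apply]
    simp only [map_sub, map_add, map_smul, LinearMap.add_apply, LinearMap.smul_apply,
      smul_eq_mul]
    linear_combination Complex.I * hcross - B b (θ b) * Complex.I_sq
  have hnonneg (u : g) : 0 ≤ (B u (θ u)).re := by
    rcases eq_or_ne u 0 with rfl | hu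
    · simp
    · exact (hpos u hu).le
  rw [hsplit, Complex.add_re]
  by_cases ha : a = 0
  · have hb : b ≠ 0 := by
      rintro rfl
      simp [ha] at hx
    exact add_pos_of_nonneg_of_pos (hnonneg a) (hpos b hb)
  · exact add_pos_of_pos_of_nonneg (hpos a ha) (hnonneg b)

namespace IsCompactConjugation

variable {B : LinearMap.BilinForm ℂ L} {τ : L →ₗ[ℝ] L}

theorem linearEquivConj (hτ : IsCompactConjugation B τ) (A : L ≃ₗ[ℝ] L)
    (hAlie : ∀ x y, A ⁅x, y⁆ = ⁅A x, A y⁆) (hAB : ∀ x y, B (A x) (A y) = B x y) :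
    IsCompactConjugation B (A.conj τ) := by
  have hAlie' (x y : L) : A.symm ⁅x, y⁆ = ⁅A.symm x, A.symm y⁆ := by
    rw [A.symm_apply_eq, hAlie, A.apply_symm_apply, A.apply_symm_apply]
  have hAB' (x y : L) : B (A.symm x) (A.symm y) = B x y := by
    rw [← hAB, A.apply_symm_apply, A.apply_symm_apply]
  refine ⟨⟨fun x => ?_, fun x y => ?_, fun x y => ?_⟩, fun x hx => ?_⟩ <;>
    simp only [LinearEquiv.conj_apply, LinearMap.comp_apply, LinearEquiv.coe_coe]
  · rw [A.symm_apply_apply, hτ.involutive, A.apply_symm_apply]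
  · rw [hAlie', hτ.map_lie, hAlie]
  · rw [hAB, hτ.map_bilin, hAB']
  · rw [← hAB' x, A.symm_apply_apply]
    exact hτ.re_bilin_pos _ (A.symm.map_ne_zero_iff.mpr hx)

theorem exists_eigenbasis [FiniteDimensional ℂ L] (hBsymm : ∀ x y : L, B x y = B y x)
    (hτ : IsCompactConjugation B τ) {σ : L →ₗ[ℝ] L} (hσ : IsConjugation B σ) :
    ∃ (n : ℕ) (b : Module.Basis (Fin n) ℝ L) (μ : Fin n → ℝ),
      (∀ i, σ (τ (σ (τ (b i)))) = μ i • b i) ∧ ∀ i, 0 < μ i := by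
  let G : LinearMap.BilinForm ℝ L := ((B.restrictScalars₁₂ ℝ ℝ).compl₂ τ).compr₂ Complex.reLm
  have hG (x y : L) : G x y = (B x (τ y)).re := rfl
  have hGsymm (x y : L) : G x y = G y x := by
    rw [hG, hG, hBsymm y, hτ.bilin_apply_left, Complex.conj_re]
  have hστ (x y : L) : G (σ (τ x)) y = G x (σ (τ y)) := by
    rw [hG, hG, hσ.bilin_apply_left, Complex.conj_re, hτ.bilin_apply_left, Complex.conj_re]
  have hστ_ne_zero {x : L} (hx : x ≠ 0) : σ (τ x) ≠ 0 := fun h => hx <| by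
    rw [← hτ.involutive x, ← hσ.involutive (τ x), h, map_zero, map_zero]
  exact exists_eigenbasis_pos_of_symmetric G hGsymm (fun x hx => hτ.re_bilin_pos x hx)
    (P := (σ ∘ₗ τ) ∘ₗ (σ ∘ₗ τ)) (fun x y => by simp only [LinearMap.comp_apply, hστ])
    (fun x hx => by
      simp only [LinearMap.comp_apply]
      rw [← hστ, hG]
      exact hτ.re_bilin_pos _ (hστ_ne_zero hx))

theorem exists_commute [FiniteDimensional ℂ L] (hBsymm : ∀ x y : L, B x y = B y x)
    (hτ : IsCompactConjugation B τ) {σ : L →ₗ[ℝ] L} (hσ : IsConjugation B σ) :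
    ∃ τ' : L →ₗ[ℝ] L, IsCompactConjugation B τ' ∧ ∀ x, σ (τ' x) = τ' (σ x) := by
  obtain ⟨n, b, μ, hP, hμ⟩ := hτ.exists_eigenbasis hBsymm hσ
  set P : L →ₗ[ℝ] L := σ ∘ₗ τ ∘ₗ σ ∘ₗ τ
  set D := b.diagRpow μ
  have hτD (t : ℝ) (x : L) : τ (D t x) = D (-t) (τ x) :=
    b.map_diagRpow_eq_diagRpow_neg_map (P := P) hP hμ
      (fun x => by simp [P, hτ.involutive, hσ.involutive]) t x
  have hσD (t : ℝ) (x : L) : σ (D t x) = D (-t) (σ x) :=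
    b.map_diagRpow_eq_diagRpow_neg_map (P := P) hP hμ
      (fun x => by simp [P, hτ.involutive, hσ.involutive]) t x
  have hDlie (t : ℝ) (x y : L) : D t ⁅x, y⁆ = ⁅D t x, D t y⁆ :=
    b.diagRpow_map_bilin (P := P) hP hμ
      (F := LinearMap.mk₂ ℝ (fun x y : L => ⁅x, y⁆) add_lie smul_lie lie_add lie_smul)
      (fun x y => by simp [P, hτ.map_lie, hσ.map_lie]) t x y
  have hDB (t : ℝ) (x y : L) : B (D t x) (D t y) = B x y :=
    b.bilin_diagRpow_diagRpow (P := P) hP hμ (F := B.restrictScalars₁₂ ℝ ℝ)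
      (fun x y => by simp [P, hτ.map_bilin, hσ.map_bilin]) t x y
  have hDD (s t : ℝ) (x : L) : D s (D t x) = D (s + t) x := b.diagRpow_diagRpow hμ s t x
  have hD0 (x : L) : D 0 x = x := b.diagRpow_zero x
  have hD1 : D 1 = P := b.diagRpow_one hP
  let A : L ≃ₗ[ℝ] L := LinearEquiv.ofLinearMap (D (1 / 4)) (D (-(1 / 4)))
    (LinearMap.ext fun x => by simp [hDD, hD0])
    (LinearMap.ext fun x => by simp [hDD, hD0])
  refine ⟨A.conj τ, hτ.linearEquivConj A (hDlie _) (hDB _), fun x => ?_⟩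
  have hστ : σ (τ x) = D 1 (τ (σ x)) := by
    rw [hD1]
    simp [P, hτ.involutive, hσ.involutive]
  calc σ (A.conj τ x) = D (-(1 / 4)) (D (-(1 / 4)) (σ (τ x))) := by
        simp [A, hσD, hτD]
    _ = D (1 / 4) (D (1 / 4) (τ (σ x))) := by
        rw [hστ, hDD, hDD, hDD]
        norm_num
    _ = A.conj τ (σ x) := by
        simp [A, hτD]

theorem exists_isCartanInvolutionOfLieAlgebras (hτ : IsCompactConjugation B τ)
    {g : LieSubalgebra ℝ L} (hg : IsRealSlice B g)
    (hcomm : ∀ x, hg.1.conj (τ x) = τ (hg.1.conj x)) :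
    ∃ θ : g →ₗ[ℝ] g, IsCartanInvolutionOfLieAlgebras B g θ := by
  have hmaps (x : L) (hx : x ∈ g) : τ x ∈ g :=
    hg.1.mem_of_conj_eq (by rw [hcomm, hg.1.conj_apply_of_mem hx])
  refine ⟨τ.restrict (p := g.toSubmodule) (q := g.toSubmodule) hmaps,
    ⟨⟨fun x => Subtype.ext (hτ.involutive x), fun x y => ?_,
      fun x hx => hτ.re_bilin_pos x (by simpa using hx)⟩, fun x y => Subtype.ext (hτ.map_lie x y)⟩⟩
  change B (τ x) y = B x (τ y)
  rw [hτ.bilin_apply_left, Complex.conj_eq_iff_im.2 (hg.2 _ x.2 _ (hmaps _ y.2))]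

end IsCompactConjugation

theorem cartanInvolution_iff_of_isRealSlice_general [FiniteDimensional ℂ L]
    (B : LinearMap.BilinForm ℂ L) (hBsymm : ∀ x y : L, B x y = B y x)
    (g g' : LieSubalgebra ℝ L)
    (hg : IsRealSlice B g) (hg' : IsRealSlice B g') :
    (∃ θ : ↥g →ₗ[ℝ] ↥g, IsCartanInvolutionOfLieAlgebras B g θ) ↔
      ∃ θ : ↥g' →ₗ[ℝ] ↥g', IsCartanInvolutionOfLieAlgebras B g' θ := by
  suffices transfer : ∀ {g g' : LieSubalgebra ℝ L}, IsRealSlice B g → IsRealSlice B g' →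
      (∃ θ : g →ₗ[ℝ] g, IsCartanInvolutionOfLieAlgebras B g θ) →
        ∃ θ : g' →ₗ[ℝ] g', IsCartanInvolutionOfLieAlgebras B g' θ from
    ⟨transfer hg hg', transfer hg' hg⟩
  rintro g g' hg hg' ⟨θ, hθ⟩
  obtain ⟨τ, hτ, hcomm⟩ :=
    (hθ.isCompactConjugation hBsymm hg).exists_commute hBsymm hg'.isConjugation_conj
  exact hτ.exists_isCartanInvolutionOfLieAlgebras hg' hcomm

/-- If `g` and `g̃` are real slices of `(L, B)`, then there exists a Cartan
involution of Lie algebras of `B|g` if and only if there exists one of `B|g̃`. -/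
theorem cartanInvolution_iff_of_isRealSlice [FiniteDimensional ℂ L]
    (B : LinearMap.BilinForm ℂ L) (hBsymm : ∀ x y : L, B x y = B y x)
    (hBnd : B.Nondegenerate) (g g' : LieSubalgebra ℝ L)
    (hg : IsRealSlice B g) (hg' : IsRealSlice B g') :
    (∃ θ : ↥g →ₗ[ℝ] ↥g, IsCartanInvolutionOfLieAlgebras B g θ) ↔
      ∃ θ : ↥g' →ₗ[ℝ] ↥g', IsCartanInvolutionOfLieAlgebras B g' θ :=
  cartanInvolution_iff_of_isRealSlice_general B hBsymm g g' hg hg'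
end

section
/- Let L be a finite-dimensional complex Lie algebra with a nondegenerate symmetric ℂ-bilinear form B, let g be a real slice of (L,B), and let θ : g → g be a Cartan involution of Lie algebras of the restriction of B to g, with Cartan decomposition g = t ⊕ p, where t = {x ∈ g : θ(x) = x} and p = {x ∈ g : θ(x) = −x}. Then the real subspace u := t + i • p of L is a real Lie subalgebra of L, is a real form of L, and is a compact real form of (L,B). -/
/-!
Setup: a finite-dimensional complex Lie algebra `L` with a nondegenerate symmetric
`ℂ`-bilinear form `B` (a "holomorphic inner product"), viewed also as a real Lie algebra.
-/

variable {L : Type*} [LieRing L] [LieAlgebra ℂ L]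

/-- If `θ` is a Cartan involution of Lie algebras of `B|g`, with Cartan
decomposition `g = t ⊕ p` (`t` and `p` the `+1`- and `(-1)`-eigenspaces of `θ`), then
`u := t + i • p` is a real Lie subalgebra of `L` which is a compact real form of `(L, B)`
(in particular a real form of `L`). -/
theorem isCompactRealForm_of_cartanDecomposition [FiniteDimensional ℂ L]
    (B : LinearMap.BilinForm ℂ L) (hBsymm : ∀ x y : L, B x y = B y x)
    (hBnd : B.Nondegenerate) (g : LieSubalgebra ℝ L) (hg : IsRealSlice B g)
    (θ : ↥g →ₗ[ℝ] ↥g) (hθ : IsCartanInvolutionOfLieAlgebras B g θ) :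
    ∃ u : LieSubalgebra ℝ L,
      (u : Set L) =
        {z : L | ∃ x y : ↥g, θ x = x ∧ θ y = -y ∧ z = (x : L) + Complex.I • (y : L)} ∧
      IsCompactRealForm B u := by
  obtain ⟨⟨hθθ, hθB, hθpos⟩, hθlie⟩ := hθ
  obtain ⟨⟨hg1, hg2⟩, hgre⟩ := hg
  -- B vanishes between `t` and `p`
  have hB0 : ∀ (a b : ↥g), θ a = a → θ b = -b → B (a : L) (b : L) = 0 := by
    intro a b ha hb
    have h2 : B ((θ a : ↥g) : L) (b : L) = B (a : L) ((θ b : ↥g) : L) := hθB a b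
    rw [ha, hb] at h2
    have h3 : ((-b : ↥g) : L) = -(b : L) := by push_cast; ring_nf
    rw [h3, map_neg] at h2
    have h4 : (2 : ℂ) * B (a : L) (b : L) = 0 := by linear_combination h2
    exact (mul_eq_zero.mp h4).resolve_left two_ne_zero
  have hcs : ∀ (r : ℝ) (v : ↥g), ((r • v : ↥g) : L) = r • (v : L) := fun _ _ => rfl
  -- expansion of B on sums
  have hBcalc : ∀ a b a' b' : ↥g,
      B ((a : L) + Complex.I • (b : L)) ((a' : L) + Complex.I • (b' : L)) =
        (B (a : L) (a' : L) - B (b : L) (b' : L)) +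
          Complex.I * (B (a : L) (b' : L) + B (b : L) (a' : L)) := by
    intro a b a' b'
    simp only [map_add, map_smul, LinearMap.add_apply, LinearMap.smul_apply, smul_eq_mul]
    linear_combination (B (b : L) (b' : L)) * Complex.I_sq
  set S : Set L :=
    {z : L | ∃ x y : ↥g, θ x = x ∧ θ y = -y ∧ z = (x : L) + Complex.I • (y : L)} with hS
  have hzeroS : (0 : L) ∈ S := ⟨0, 0, map_zero θ, by simp, by simp⟩
  have haddS : ∀ {z w : L}, z ∈ S → w ∈ S → z + w ∈ S := by
    rintro z w ⟨a, b, ha, hb, rfl⟩ ⟨a', b', ha', hb', rfl⟩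
    refine ⟨a + a', b + b', by rw [map_add, ha, ha'],
      by rw [map_add, hb, hb']; abel, ?_⟩
    push_cast
    rw [smul_add]
    abel
  have hsmulS : ∀ (r : ℝ) {z : L}, z ∈ S → r • z ∈ S := by
    rintro r z ⟨a, b, ha, hb, rfl⟩
    refine ⟨r • a, r • b, by rw [map_smul, ha], by rw [map_smul, hb, smul_neg], ?_⟩
    push_cast
    rw [smul_add, smul_comm r Complex.I]
  have hlieS : ∀ {z w : L}, z ∈ S → w ∈ S → ⁅z, w⁆ ∈ S := by
    rintro z w ⟨a, b, ha, hb, rfl⟩ ⟨a', b', ha', hb', rfl⟩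
    refine ⟨⁅a, a'⁆ - ⁅b, b'⁆, ⁅a, b'⁆ + ⁅b, a'⁆, ?_, ?_, ?_⟩
    · rw [map_sub, hθlie, hθlie, ha, ha', hb, hb', neg_lie, lie_neg, neg_neg]
    · rw [map_add, hθlie, hθlie, ha, ha', hb, hb', neg_lie, lie_neg, neg_add_rev]
      abel
    · push_cast [LieSubalgebra.coe_bracket]
      simp only [lie_add, add_lie, lie_smul, smul_lie, smul_smul, Complex.I_mul_I,
        neg_one_smul, smul_add, smul_sub]
      abel
  refine ⟨{ carrier := S
            add_mem' := haddS
            zero_mem' := hzeroS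
            smul_mem' := hsmulS
            lie_mem' := hlieS }, rfl, ⟨⟨?_, ?_⟩, ?_⟩, ?_⟩
  · -- u ∩ i u = 0
    rintro z ⟨a, b, ha, hb, rfl⟩ w ⟨a', b', ha', hb', rfl⟩ hzw
    rw [smul_add, smul_smul, Complex.I_mul_I, neg_one_smul] at hzw
    have key : (a : L) + ((b' : ↥g) : L) = Complex.I • (((a' - b : ↥g)) : L) := by
      push_cast
      rw [smul_sub]
      have h5 : (a : L) = Complex.I • (a' : L) + -(b' : L) - Complex.I • (b : L) := by
        rw [← hzw]; abel
      rw [h5]; abel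
    have h0 : (a : L) + ((b' : ↥g) : L) = 0 :=
      hg1 _ (g.add_mem a.2 b'.2) _ (a' - b : ↥g).2 key
    have h1 : Complex.I • ((a' - b : ↥g) : L) = 0 := by rw [← key, h0]
    have h2 : a' = b := by
      have h2a : ((a' - b : ↥g) : L) = 0 := by
        rcases smul_eq_zero.mp h1 with h | h
        · exact absurd h Complex.I_ne_zero
        · exact h
      have h2b : (a' - b : ↥g) = 0 := Subtype.ext h2a
      exact sub_eq_zero.mp h2b
    have hab' : a = -b' := by
      apply Subtype.ext
      push_cast
      exact eq_neg_of_add_eq_zero_left h0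
    have ha0 : a = 0 := by
      have h3 : θ a = -a := by
        rw [hab', map_neg, hb', neg_neg]
      have h4 : a = -a := ha.symm.trans h3
      have h5 : a + a = 0 := by nth_rewrite 1 [h4]; exact neg_add_cancel a
      have h6 : (2 : ℝ) • a = 0 := by rw [two_smul]; exact h5
      rcases smul_eq_zero.mp h6 with h | h
      · norm_num at h
      · exact h
    have hb0 : b = 0 := by
      have h3 : θ b = b := by rw [← h2, ha', h2]
      have h4 : b = -b := h3.symm.trans hb
      have h5 : b + b = 0 := by nth_rewrite 1 [h4]; exact neg_add_cancel b
      have h6 : (2 : ℝ) • b = 0 := by rw [two_smul]; exact h5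
      rcases smul_eq_zero.mp h6 with h | h
      · norm_num at h
      · exact h
    rw [ha0, hb0]
    simp
  · -- u + i u = L
    intro z
    obtain ⟨x, hx, y, hy, rfl⟩ := hg2 z
    set X : ↥g := ⟨x, hx⟩ with hXdef
    set Y : ↥g := ⟨y, hy⟩ with hYdef
    refine ⟨(((1/2 : ℝ) • (X + θ X) : ↥g) : L) +
        Complex.I • (((1/2 : ℝ) • (Y - θ Y) : ↥g) : L),
      ⟨(1/2 : ℝ) • (X + θ X), (1/2 : ℝ) • (Y - θ Y), ?_, ?_, rfl⟩,
      (((1/2 : ℝ) • (Y + θ Y) : ↥g) : L) +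
        Complex.I • (((-((1/2 : ℝ) • (X - θ X)) : ↥g)) : L),
      ⟨(1/2 : ℝ) • (Y + θ Y), -((1/2 : ℝ) • (X - θ X)), ?_, ?_, rfl⟩, ?_⟩
    · rw [map_smul, map_add, hθθ]; module
    · rw [map_smul, map_sub, hθθ]; module
    · rw [map_smul, map_add, hθθ]; module
    · rw [map_neg, map_smul, map_sub, hθθ]; module
    · have hX : (X : L) = x := rfl
      have hY : (Y : L) = y := rfl
      push_cast
      push_cast
      have hc : ∀ (r : ℝ) (v : L), r • v = (r : ℂ) • v := fun r v => rfl
      simp only [smul_add, smul_sub, smul_neg, smul_smul, Complex.I_mul_I, neg_one_smul]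
      simp only [hc]
      module
  · -- B is real-valued on u
    rintro z ⟨a, b, ha, hb, rfl⟩ w ⟨a', b', ha', hb', rfl⟩
    rw [hBcalc, hB0 a b' ha hb', hBsymm (b : L) (a' : L), hB0 a' b ha' hb]
    simp only [add_zero, mul_zero, Complex.sub_im]
    rw [hgre _ a.2 _ a'.2, hgre _ b.2 _ b'.2]
    ring
  · -- positive definiteness
    rintro z ⟨a, b, ha, hb, rfl⟩ hz
    rw [hBcalc, hB0 a b ha hb, hBsymm (b : L) (a : L), hB0 a b ha hb]
    simp only [add_zero, mul_zero, Complex.sub_re]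
    have hab : a ≠ 0 ∨ b ≠ 0 := by
      by_contra h
      push_neg at h
      exact hz (by rw [h.1, h.2]; simp)
    have hta : a ≠ 0 → 0 < (B (a : L) (a : L)).re := by
      intro h
      have := hθpos a h
      rwa [ha] at this
    have htb : b ≠ 0 → (B (b : L) (b : L)).re < 0 := by
      intro h
      have h1 := hθpos b h
      rw [hb] at h1
      have hn : ((-b : ↥g) : L) = -(b : L) := by push_cast; ring_nf
      rw [hn, map_neg, Complex.neg_re] at h1
      linarith
    rcases hab with h | h
    · rcases eq_or_ne b 0 with hb0 | hb0
      · have : (B (b : L) (b : L)).re = 0 := by rw [hb0]; simp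
        linarith [hta h]
      · linarith [hta h, htb hb0]
    · rcases eq_or_ne a 0 with ha0 | ha0
      · have : (B (a : L) (a : L)).re = 0 := by rw [ha0]; simp
        linarith [htb h]
      · linarith [hta ha0, htb h]
end

section
/- Let L be a finite-dimensional complex Lie algebra with a nondegenerate symmetric ℂ-bilinear form B, let g be a real slice of (L,B), and let θ₁, θ₂ : g → g be two Cartan involutions of Lie algebras of the restriction of B to g. Then there exists an ℝ-linear map ψ : g → g which is a Lie algebra automorphism of g, satisfies B(ψ(x), ψ(y)) = B(x,y) for all x,y ∈ g, lies in the identity component of the automorphism group Aut(g) and in the identity component of the orthogonal group of B|g (both viewed as topological subgroups of GL(g)), and satisfies ψ ∘ θ₁ ∘ ψ⁻¹ = θ₂. -/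
/-!
Setup: a finite-dimensional complex Lie algebra `L` with a nondegenerate symmetric
`ℂ`-bilinear form `B` (a "holomorphic inner product"), viewed also as a real Lie algebra.
-/

variable {L : Type*} [LieRing L] [LieAlgebra ℂ L]

/-- The (matrix-entry) topology on the group of linear automorphisms of a
finite-dimensional real vector space, induced by the entries of the matrix in a fixed
basis; this is the standard topology of `GL(V)`. -/
noncomputable def autTopology (V : Type*) [AddCommGroup V] [Module ℝ V]
    [FiniteDimensional ℝ V] : TopologicalSpace (V ≃ₗ[ℝ] V) :=
  TopologicalSpace.induced
    (fun e i j => (Module.finBasis ℝ V).repr (e (Module.finBasis ℝ V j)) i)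
    inferInstance

/-- `ψ` lies in the identity component of the subgroup `S` of `GL(V)` (with its subspace
topology). -/
def MemIdentityComponent (V : Type*) [AddCommGroup V] [Module ℝ V] [FiniteDimensional ℝ V]
    (S : Subgroup (V ≃ₗ[ℝ] V)) (ψ : V ≃ₗ[ℝ] V) : Prop :=
  letI := autTopology V
  ∃ h : ψ ∈ S, (⟨ψ, h⟩ : S) ∈ connectedComponent (1 : S)

/-- The subgroup of `GL(V)` preserving a given (not necessarily real-valued) pairing `b`. -/
def isometrySubgroup {V : Type*} [AddCommGroup V] [Module ℝ V] {α : Type*}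
    (b : V → V → α) : Subgroup (V ≃ₗ[ℝ] V) where
  carrier := {A | ∀ x y : V, b (A x) (A y) = b x y}
  one_mem' := fun _ _ => rfl
  mul_mem' := fun {a c} ha hc x y => (ha (c x) (c y)).trans (hc x y)
  inv_mem' := by
    intro a ha x y
    have h1 : a⁻¹ = a.symm := rfl
    rw [h1]
    conv_rhs => rw [← a.apply_symm_apply x, ← a.apply_symm_apply y]
    exact (ha (a.symm x) (a.symm y)).symm ▸ rfl

/-- The automorphism group of a real Lie algebra, as a subgroup of `GL(g)`. -/
def lieAutSubgroup (g : Type*) [LieRing g] [LieAlgebra ℝ g] :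
    Subgroup (g ≃ₗ[ℝ] g) where
  carrier := {A | ∀ x y : g, A ⁅x, y⁆ = ⁅A x, A y⁆}
  one_mem' := fun _ _ => rfl
  mul_mem' := fun {a c} ha hc x y => by
    show a (c ⁅x, y⁆) = ⁅a (c x), a (c y)⁆
    rw [hc, ha]
  inv_mem' := by
    intro a ha x y
    have h1 : a⁻¹ = a.symm := rfl
    rw [h1]
    apply a.injective
    rw [ha, a.apply_symm_apply, a.apply_symm_apply, a.apply_symm_apply]


/-!
For the inner product `⟪x, y⟫ = re (B x (θ₂ y))` on `g`, the automorphism `T = θ₁ θ₂` is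
self-adjoint, with positive eigenvalues since `B (θ₁ θ₂ x) (θ₂ x) = B (θ₂ x) (θ₁ θ₂ x) > 0`. So `T`
is diagonal in a basis with positive entries `λᵢ`, and has real powers `Tˢ`. The bracket of two
eigenvectors is an eigenvector for the product of their eigenvalues, and `B` pairs eigenvectors
trivially unless that product is `1`; hence every `Tˢ`, like `T`, preserves the bracket and `B`.
As `θ₁ T θ₁ = T⁻¹`, the map `ψ = T^(-1/2)` conjugates `θ₁` to `θ₁ T = θ₂`, and `s ↦ Tˢ` joins `1`
to `ψ` inside both groups.
-/

namespace Module.Basis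

section Semiring

variable {ι R V : Type*} [CommSemiring R] [AddCommMonoid V] [Module R V] (b : Basis ι R V)

noncomputable def diagOp (d : ι → R) : Module.End R V :=
  b.constr R fun i => d i • b i

@[simp]
lemma diagOp_apply_self (d : ι → R) (i : ι) : b.diagOp d (b i) = d i • b i := by
  simp [diagOp]

lemma diagOp_mul (d e : ι → R) : b.diagOp (d * e) = b.diagOp d * b.diagOp e :=
  b.ext fun i => by simp [mul_smul, mul_comm (d i)]

@[simp]
lemma diagOp_one : b.diagOp 1 = 1 :=
  b.ext fun i => by simp

lemma diagOp_apply [Fintype ι] (d : ι → R) (v : V) :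
    b.diagOp d v = ∑ k, (d k * b.equivFun v k) • b k := by
  simp [diagOp, constr_apply_fintype, smul_smul, mul_comm]

lemma equivFun_diagOp [Fintype ι] (d : ι → R) (v : V) :
    b.equivFun (b.diagOp d v) = d * b.equivFun v := by
  rw [diagOp_apply, ← b.equivFun_symm_apply, LinearEquiv.apply_symm_apply]
  rfl

end Semiring

lemma diagOp_comp_apply_of_apply_eq_smul {ι K V : Type*} [Fintype ι] [Field K] [AddCommGroup V]
    [Module K V] (b : Basis ι K V) (d : ι → K) (f : K → K) {v : V} {μ : K}
    (hv : b.diagOp d v = μ • v) : b.diagOp (f ∘ d) v = f μ • v := by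
  apply b.equivFun.injective
  ext k
  have hk := congrFun (congrArg b.equivFun hv) k
  simp only [equivFun_diagOp, map_smul, Pi.mul_apply, Pi.smul_apply, smul_eq_mul,
    Function.comp_apply] at hk ⊢
  rcases eq_or_ne (b.equivFun v k) 0 with h | h
  · simp [h]
  · rw [mul_right_cancel₀ h hk]

section Rpow

variable {ι V : Type*} [AddCommGroup V] [Module ℝ V] (b : Basis ι ℝ V) {lam : ι → ℝ}

lemma diagOp_rpow_mul_rpow (hlam : ∀ i, 0 < lam i) (s t : ℝ) :
    b.diagOp (lam ^ s) * b.diagOp (lam ^ t) = b.diagOp (lam ^ (s + t)) := by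
  rw [← diagOp_mul]
  congr 1
  funext i
  simp [Real.rpow_add (hlam i)]

noncomputable def diagRpowEquiv (hlam : ∀ i, 0 < lam i) (s : ℝ) : V ≃ₗ[ℝ] V :=
  LinearEquiv.ofLinearMap (b.diagOp (lam ^ s)) (b.diagOp (lam ^ (-s)))
    (by rw [← Module.End.mul_eq_comp, diagOp_rpow_mul_rpow b hlam, add_neg_cancel]; ext; simp)
    (by rw [← Module.End.mul_eq_comp, diagOp_rpow_mul_rpow b hlam, neg_add_cancel]; ext; simp)

@[simp]
lemma diagRpowEquiv_apply (hlam : ∀ i, 0 < lam i) (s : ℝ) (v : V) :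
    b.diagRpowEquiv hlam s v = b.diagOp (lam ^ s) v := rfl

@[simp]
lemma diagRpowEquiv_symm_apply (hlam : ∀ i, 0 < lam i) (s : ℝ) (v : V) :
    (b.diagRpowEquiv hlam s).symm v = b.diagOp (lam ^ (-s)) v := rfl

lemma diagRpowEquiv_zero (hlam : ∀ i, 0 < lam i) : b.diagRpowEquiv hlam 0 = 1 := by
  ext v
  simp

lemma continuous_repr_diagOp_rpow [Fintype ι] (hlam : ∀ i, 0 < lam i) {κ : Type*}
    (c : Basis κ ℝ V) (v : V) (k : κ) :
    Continuous fun s : ℝ => c.repr (b.diagOp (lam ^ s) v) k := by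
  simp only [diagOp_apply, map_sum, map_smul, Finsupp.coe_finsetSum, Finset.sum_apply,
    Finsupp.smul_apply, smul_eq_mul, Pi.pow_apply]
  fun_prop (disch := exact (hlam _).ne')

lemma diagOp_rpow_compl₁₂ {κ W : Type*} [Fintype κ] [AddCommGroup W] [Module ℝ W]
    (c : Basis κ ℝ W) {mu : κ → ℝ} (hlam : ∀ i, 0 ≤ lam i) (β : V →ₗ[ℝ] V →ₗ[ℝ] W)
    (h : β.compl₁₂ (b.diagOp lam) (b.diagOp lam) = β.compr₂ (c.diagOp mu)) (s : ℝ) :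
    β.compl₁₂ (b.diagOp (lam ^ s)) (b.diagOp (lam ^ s)) = β.compr₂ (c.diagOp (mu ^ s)) := by
  refine LinearMap.ext_basis b b fun i j => ?_
  have hij : c.diagOp mu (β (b i) (b j)) = (lam i * lam j) • β (b i) (b j) := by
    simpa [smul_smul, mul_comm] using (LinearMap.congr_fun₂ h (b i) (b j)).symm
  simp only [LinearMap.compl₁₂_apply, LinearMap.compr₂_apply, diagOp_apply_self, map_smul,
    LinearMap.smul_apply, smul_smul]
  rw [show mu ^ s = (· ^ s) ∘ mu from rfl, c.diagOp_comp_apply_of_apply_eq_smul mu _ hij,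
    Real.mul_rpow (hlam i) (hlam j), Pi.pow_apply, Pi.pow_apply, mul_comm]

lemma diagOp_rpow_apply_apply [Fintype ι] {W : Type*} [AddCommGroup W] [Module ℝ W]
    [FiniteDimensional ℝ W] (hlam : ∀ i, 0 ≤ lam i) (β : V →ₗ[ℝ] V →ₗ[ℝ] W)
    (h : ∀ x y, β (b.diagOp lam x) (b.diagOp lam y) = β x y) (s : ℝ) (x y : V) :
    β (b.diagOp (lam ^ s) x) (b.diagOp (lam ^ s) y) = β x y := by
  have := b.diagOp_rpow_compl₁₂ (finBasis ℝ W) (mu := 1) hlam β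
    (LinearMap.ext₂ fun x y => by simp [h]) s
  rw [show (1 : Fin _ → ℝ) ^ s = 1 from funext fun _ => Real.one_rpow s] at this
  simpa using LinearMap.congr_fun₂ this x y

lemma diagOp_rpow_comp [Fintype ι] (hlam : ∀ i, 0 < lam i) {θ : Module.End ℝ V}
    (hθ : ∀ v, b.diagOp lam (θ (b.diagOp lam v)) = θ v) (s : ℝ) :
    b.diagOp (lam ^ s) ∘ₗ θ = θ ∘ₗ b.diagOp (lam ^ (-s)) := by
  refine b.ext fun i => ?_
  have hi : b.diagOp lam (θ (b i)) = (lam i)⁻¹ • θ (b i) := by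
    have := hθ (b i)
    rw [diagOp_apply_self, map_smul, map_smul] at this
    exact (eq_inv_smul_iff₀ (hlam i).ne').mpr this
  simp only [LinearMap.comp_apply, diagOp_apply_self, map_smul, Pi.pow_apply]
  rw [show lam ^ s = (· ^ s) ∘ lam from rfl, b.diagOp_comp_apply_of_apply_eq_smul lam _ hi,
    Real.inv_rpow (hlam i).le, Real.rpow_neg (hlam i).le]

lemma diagRpowEquiv_conj [Fintype ι] (hlam : ∀ i, 0 < lam i) {θ : Module.End ℝ V}
    (hθ : ∀ v, b.diagOp lam (θ (b.diagOp lam v)) = θ v) (v : V) :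
    b.diagRpowEquiv hlam (-(1 / 2)) (θ ((b.diagRpowEquiv hlam (-(1 / 2))).symm v)) =
      θ (b.diagOp lam v) := by
  rw [diagRpowEquiv_apply, diagRpowEquiv_symm_apply, ← LinearMap.comp_apply,
    b.diagOp_rpow_comp hlam hθ, LinearMap.comp_apply, ← Module.End.mul_apply (b.diagOp _),
    diagOp_rpow_mul_rpow b hlam]
  norm_num

end Rpow

lemma diagOp_rpow_lie {ι 𝔤 : Type*} [Fintype ι] [LieRing 𝔤] [LieAlgebra ℝ 𝔤] (b : Basis ι ℝ 𝔤)
    {lam : ι → ℝ} (hlam : ∀ i, 0 ≤ lam i)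
    (h : ∀ x y, b.diagOp lam ⁅x, y⁆ = ⁅b.diagOp lam x, b.diagOp lam y⁆) (s : ℝ) (x y : 𝔤) :
    b.diagOp (lam ^ s) ⁅x, y⁆ = ⁅b.diagOp (lam ^ s) x, b.diagOp (lam ^ s) y⁆ := by
  have := b.diagOp_rpow_compl₁₂ b (mu := lam) hlam (LieModule.toEnd ℝ 𝔤 𝔤)
    (LinearMap.ext₂ fun x y => by simp [h]) s
  simpa using (LinearMap.congr_fun₂ this x y).symm

end Module.Basis

lemma memIdentityComponent_of_continuous {V : Type*} [AddCommGroup V] [Module ℝ V]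
    [FiniteDimensional ℝ V] {X : Type*} [TopologicalSpace X] [PreconnectedSpace X]
    (S : Subgroup (V ≃ₗ[ℝ] V)) {F : X → V ≃ₗ[ℝ] V} (hS : ∀ x, F x ∈ S)
    (hF : ∀ v i, Continuous fun x => (Module.finBasis ℝ V).repr (F x v) i) {x₀ : X}
    (h₀ : F x₀ = 1) (x : X) : MemIdentityComponent V S (F x) := by
  let := autTopology V
  have hcont : Continuous fun x => (⟨F x, hS x⟩ : S) :=
    (continuous_induced_rng.2 (continuous_pi fun i => continuous_pi fun j => hF _ i)).subtype_mk _
  exact ⟨hS x, (isPreconnected_range hcont).subset_connectedComponent ⟨x₀, Subtype.ext h₀⟩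
    ⟨x, rfl⟩⟩

namespace LinearMap.BilinForm

variable {V : Type*} [AddCommGroup V] [Module ℝ V] {β : LinearMap.BilinForm ℝ V}
  {θ θ₁ θ₂ : Module.End ℝ V}

structure IsCartanInvolution (β : LinearMap.BilinForm ℝ V) (θ : Module.End ℝ V) : Prop where
  involutive : Function.Involutive θ
  isAdjointPair : β.IsAdjointPair β θ θ
  pos : ∀ x, x ≠ 0 → 0 < β x (θ x)

namespace IsCartanInvolution

noncomputable abbrev innerProductCore (hβ : β.IsSymm) (h : β.IsCartanInvolution θ) :
    InnerProductSpace.Core ℝ V where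
  inner x y := β x (θ y)
  conj_inner_symm x y := by simp [hβ.eq y, h.isAdjointPair x y]
  re_inner_nonneg x := by
    rcases eq_or_ne x 0 with rfl | hx
    · simp
    · exact (h.pos x hx).le
  add_left := by simp
  smul_left := by simp
  definite x hx := by_contra fun h0 => (h.pos x h0).ne' hx

lemma pos_of_comp_apply_eq_smul (h₁ : β.IsCartanInvolution θ₁) (h₂ : β.IsCartanInvolution θ₂)
    {v : V} (hv : v ≠ 0) {μ : ℝ} (hμ : θ₁ (θ₂ v) = μ • v) : 0 < μ := by
  have hθ₂v : θ₂ v ≠ 0 := fun h0 => hv (by rw [← h₂.involutive v, h0, map_zero])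
  have key := h₁.pos _ hθ₂v
  rw [← h₁.isAdjointPair, hμ, map_smul, LinearMap.smul_apply, smul_eq_mul] at key
  exact pos_of_mul_pos_left key (h₂.pos v hv).le

lemma exists_basis_comp_eq_diagOp [FiniteDimensional ℝ V] (hβ : β.IsSymm)
    (h₁ : β.IsCartanInvolution θ₁) (h₂ : β.IsCartanInvolution θ₂) :
    ∃ (b : Module.Basis (Fin (Module.finrank ℝ V)) ℝ V) (lam : Fin (Module.finrank ℝ V) → ℝ),
      (∀ i, 0 < lam i) ∧ θ₁ ∘ₗ θ₂ = b.diagOp lam := by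
  let : NormedAddCommGroup V := (h₂.innerProductCore hβ).toNormedAddCommGroup
  let : InnerProductSpace ℝ V := InnerProductSpace.ofCore (h₂.innerProductCore hβ).toCore
  have hT : (θ₁ ∘ₗ θ₂).IsSymmetric := fun x y => by
    change β (θ₁ (θ₂ x)) (θ₂ y) = β x (θ₂ (θ₁ (θ₂ y)))
    rw [h₁.isAdjointPair, h₂.isAdjointPair]
  let b := (hT.eigenvectorBasis rfl).toBasis
  have hb : ∀ i, θ₁ (θ₂ (b i)) = hT.eigenvalues rfl i • b i := fun i => by
    rw [OrthonormalBasis.coe_toBasis]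
    exact hT.apply_eigenvectorBasis rfl i
  exact ⟨b, hT.eigenvalues rfl, fun i => pos_of_comp_apply_eq_smul h₁ h₂ (b.ne_zero i) (hb i),
    b.ext fun i => by simpa using hb i⟩

end IsCartanInvolution

end LinearMap.BilinForm

noncomputable def restrictForm (B : LinearMap.BilinForm ℂ L) (g : LieSubalgebra ℝ L) :
    ↥g →ₗ[ℝ] ↥g →ₗ[ℝ] ℂ :=
  (B.restrictScalars₁₂ ℝ ℝ).compl₁₂ g.toSubmodule.subtype g.toSubmodule.subtype

@[simp]
lemma restrictForm_apply (B : LinearMap.BilinForm ℂ L) (g : LieSubalgebra ℝ L) (x y : ↥g) :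
    restrictForm B g x y = B x y := rfl

lemma isSymm_restrictForm_re {B : LinearMap.BilinForm ℂ L} (hB : ∀ x y, B x y = B y x)
    (g : LieSubalgebra ℝ L) :
    LinearMap.BilinForm.IsSymm ((restrictForm B g).compr₂ Complex.reLm) :=
  ⟨fun x y => by simp [hB]⟩

namespace IsCartanInvolutionOfMetric

variable {B : LinearMap.BilinForm ℂ L} {g : LieSubalgebra ℝ L} {θ : ↥g →ₗ[ℝ] ↥g}

lemma isCartanInvolution_re (h : IsCartanInvolutionOfMetric B g θ) :
    LinearMap.BilinForm.IsCartanInvolution ((restrictForm B g).compr₂ Complex.reLm) θ where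
  involutive := h.1
  isAdjointPair x y := by simp [h.2.1]
  pos := by simpa using h.2.2

lemma restrictForm_apply_apply (h : IsCartanInvolutionOfMetric B g θ) (x y : ↥g) :
    restrictForm B g (θ x) (θ y) = restrictForm B g x y := by
  rw [restrictForm_apply, h.2.1, h.1, restrictForm_apply]

end IsCartanInvolutionOfMetric

theorem cartanInvolutionsOfLieAlgebras_conjugate_general [FiniteDimensional ℂ L]
    (B : LinearMap.BilinForm ℂ L) (hBsymm : ∀ x y : L, B x y = B y x)
    (g : LieSubalgebra ℝ L)
    (θ₁ θ₂ : ↥g →ₗ[ℝ] ↥g) (h₁ : IsCartanInvolutionOfLieAlgebras B g θ₁)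
    (h₂ : IsCartanInvolutionOfLieAlgebras B g θ₂) :
    ∃ ψ : ↥g ≃ₗ[ℝ] ↥g,
      (∀ x y : ↥g, ψ ⁅x, y⁆ = ⁅ψ x, ψ y⁆) ∧
      (∀ x y : ↥g, B (ψ x : L) (ψ y : L) = B (x : L) (y : L)) ∧
      MemIdentityComponent ↥g (lieAutSubgroup ↥g) ψ ∧
      MemIdentityComponent ↥g (isometrySubgroup fun x y : ↥g => B (x : L) (y : L)) ψ ∧
      ∀ x : ↥g, ψ (θ₁ (ψ.symm x)) = θ₂ x := by
  obtain ⟨hθ₁, hlie₁⟩ := h₁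
  obtain ⟨hθ₂, hlie₂⟩ := h₂
  obtain ⟨b, lam, hlam, hT⟩ := hθ₁.isCartanInvolution_re.exists_basis_comp_eq_diagOp
    (isSymm_restrictForm_re hBsymm g) hθ₂.isCartanInvolution_re
  have hlie := b.diagOp_rpow_lie (fun i => (hlam i).le) (by simp [← hT, hlie₁, hlie₂])
  have hB := b.diagOp_rpow_apply_apply (fun i => (hlam i).le) (restrictForm B g)
    (by simp only [← hT, LinearMap.comp_apply, hθ₁.restrictForm_apply_apply,
      hθ₂.restrictForm_apply_apply, implies_true])
  have hpath : ∀ S, (∀ s, b.diagRpowEquiv hlam s ∈ S) →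
      MemIdentityComponent ↥g S (b.diagRpowEquiv hlam (-(1 / 2))) := fun S hS =>
    memIdentityComponent_of_continuous S hS
      (fun v i => b.continuous_repr_diagOp_rpow hlam (Module.finBasis ℝ ↥g) v i)
      (b.diagRpowEquiv_zero hlam) _
  refine ⟨b.diagRpowEquiv hlam (-(1 / 2)), hlie _, hB _, hpath _ hlie, hpath _ hB, fun x => ?_⟩
  rw [b.diagRpowEquiv_conj hlam (fun v => by simp [← hT, hθ₁.1, hθ₂.1]), ← hT,
    LinearMap.comp_apply, hθ₁.1]

/-- Two Cartan involutions of Lie algebras `θ₁, θ₂` of the metric `B|g` on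
a real slice `g` of `(L, B)` are conjugate by a Lie algebra automorphism `ψ` of `g`
preserving `B|g`, lying both in the identity component of `Aut(g)` and in the identity
component of the orthogonal group `O(B|g)` (as topological subgroups of `GL(g)`). -/
theorem cartanInvolutionsOfLieAlgebras_conjugate [FiniteDimensional ℂ L]
    (B : LinearMap.BilinForm ℂ L) (hBsymm : ∀ x y : L, B x y = B y x)
    (hBnd : B.Nondegenerate) (g : LieSubalgebra ℝ L) (hg : IsRealSlice B g)
    (θ₁ θ₂ : ↥g →ₗ[ℝ] ↥g) (h₁ : IsCartanInvolutionOfLieAlgebras B g θ₁)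
    (h₂ : IsCartanInvolutionOfLieAlgebras B g θ₂) :
    ∃ ψ : ↥g ≃ₗ[ℝ] ↥g,
      (∀ x y : ↥g, ψ ⁅x, y⁆ = ⁅ψ x, ψ y⁆) ∧
      (∀ x y : ↥g, B (ψ x : L) (ψ y : L) = B (x : L) (y : L)) ∧
      MemIdentityComponent ↥g (lieAutSubgroup ↥g) ψ ∧
      MemIdentityComponent ↥g (isometrySubgroup fun x y : ↥g => B (x : L) (y : L)) ψ ∧
      ∀ x : ↥g, ψ (θ₁ (ψ.symm x)) = θ₂ x :=
  cartanInvolutionsOfLieAlgebras_conjugate_general B hBsymm g θ₁ θ₂ h₁ h₂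
end

section
/- Let h₃(ℝ) be the Heisenberg Lie algebra, i.e. the real Lie algebra of strictly upper triangular 3×3 real matrices (matrices M with M i j = 0 whenever j ≤ i), with the commutator bracket. Then there is no involutive Lie algebra automorphism θ of h₃(ℝ) (θ ∘ θ = id) whose (−1)-eigenspace {x : θ(x) = −x} is one-dimensional. -/
/-!
Let `v` span the `(-1)`-eigenspace of `θ`. For every `x`, `x - θ x` is a `(-1)`-eigenvector,
hence a multiple of `v`, so `θ ⁅v, x⁆ = ⁅-v, θ x⁆ = -⁅v, x⁆` and `⁅v, x⁆` is again a multiple of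
`v`. Since `ad x` is nilpotent on `h₃(ℝ)`, this forces `⁅v, x⁆ = 0`: `v` is central. The centre
of `h₃(ℝ)` consists of brackets, and once the `(-1)`-eigenspace is central `θ` fixes every
bracket, `⁅θ x, θ y⁆ = ⁅x, y⁆`. So `θ v = v = -v`, a contradiction.
-/

/-- Auxiliary fact: the product of two strictly upper triangular `3 × 3` matrices is
strictly upper triangular. -/
theorem mul_strictlyUpper {a b : Matrix (Fin 3) (Fin 3) ℝ}
    (ha : ∀ i j, j ≤ i → a i j = 0) (hb : ∀ i j, j ≤ i → b i j = 0) :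
    ∀ i j, j ≤ i → (a * b) i j = 0 := by
  intro i j hij
  rw [Matrix.mul_apply]
  apply Finset.sum_eq_zero
  intro k _
  rcases le_or_gt k i with h | h
  · rw [ha i k h, zero_mul]
  · rw [hb k j (hij.trans h.le), mul_zero]

attribute [local instance 100] LieRing.ofAssociativeRing

/-- The 3-dimensional Heisenberg Lie algebra `h₃(ℝ)`: strictly upper triangular `3 × 3`
real matrices with the commutator bracket. -/
def heisenberg : LieSubalgebra ℝ (Matrix (Fin 3) (Fin 3) ℝ) where
  carrier := {M | ∀ i j : Fin 3, j ≤ i → M i j = 0}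
  zero_mem' := fun i j _ => rfl
  add_mem' := by
    intro a b ha hb i j hij
    show a i j + b i j = 0
    rw [ha i j hij, hb i j hij, add_zero]
  smul_mem' := by
    intro c a ha i j hij
    show c * a i j = 0
    rw [ha i j hij, mul_zero]
  lie_mem' := by
    intro a b ha hb i j hij
    show ⁅a, b⁆ i j = 0
    rw [Ring.lie_def]
    show (a * b) i j - (b * a) i j = 0
    rw [mul_strictlyUpper ha hb i j hij, mul_strictlyUpper hb ha i j hij, sub_zero]

section Involution

variable {R L : Type*} [CommRing R] [LieRing L] [LieAlgebra R L] (θ : L →ₗ⁅R⁆ L)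

namespace LieHom

theorem apply_sub_apply_eq_neg (hθ : ∀ x, θ (θ x) = x) (x : L) :
    θ (x - θ x) = -(x - θ x) := by
  rw [map_sub, hθ, neg_sub]

theorem apply_lie_eq_neg_of_lie_eq_zero (hθ : ∀ x, θ (θ x) = x) {v : L} (hv : θ v = -v)
    (hcomm : ∀ k, θ k = -k → ⁅v, k⁆ = 0) (x : L) : θ ⁅v, x⁆ = -⁅v, x⁆ := by
  have hx : ⁅v, x⁆ = ⁅v, θ x⁆ := by
    rw [← sub_eq_zero, ← lie_sub]
    exact hcomm _ (θ.apply_sub_apply_eq_neg hθ x)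
  rw [θ.map_lie, hv, neg_lie, ← hx]

theorem apply_lie_eq_lie_of_central (hθ : ∀ x, θ (θ x) = x)
    (hcentral : ∀ k, θ k = -k → ∀ y : L, ⁅k, y⁆ = 0) (x y : L) : θ ⁅x, y⁆ = ⁅x, y⁆ := by
  have hx : ⁅x, y⁆ = ⁅θ x, y⁆ := by
    rw [← sub_eq_zero, ← sub_lie]
    exact hcentral _ (θ.apply_sub_apply_eq_neg hθ x) y
  have hy : ⁅y, θ x⁆ = ⁅θ y, θ x⁆ := by
    rw [← sub_eq_zero, ← sub_lie]
    exact hcentral _ (θ.apply_sub_apply_eq_neg hθ y) (θ x)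
  rw [θ.map_lie, ← lie_skew, ← hy, lie_skew, ← hx]

end LieHom

end Involution

section Field

variable {K L : Type*} [Field K] [LieRing L] [LieAlgebra K L]

theorem lie_eq_zero_of_lie_eq_smul {v x : L} {s : K} (h : ⁅v, x⁆ = s • v)
    (h2 : ⁅⁅v, x⁆, x⁆ = 0) : ⁅v, x⁆ = 0 := by
  have hss : s • s • v = 0 := by rw [← h, ← smul_lie, ← h, h2]
  rw [h]
  rcases smul_eq_zero.mp hss with hs | hs
  · rw [hs, zero_smul]
  · exact hs

theorem LieHom.lie_eq_zero_of_forall_neg_eq_smul (θ : L →ₗ⁅K⁆ L) (hθ : ∀ x, θ (θ x) = x) {v : L}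
    (hv : θ v = -v) (hspan : ∀ k, θ k = -k → ∃ c : K, c • v = k)
    (hnil : ∀ x y : L, ⁅⁅x, y⁆, y⁆ = 0) (x : L) : ⁅v, x⁆ = 0 := by
  have hcomm : ∀ k, θ k = -k → ⁅v, k⁆ = 0 := fun k hk => by
    obtain ⟨c, rfl⟩ := hspan k hk
    rw [lie_smul, lie_self, smul_zero]
  obtain ⟨s, hs⟩ := hspan _ (θ.apply_lie_eq_neg_of_lie_eq_zero hθ hv hcomm x)
  exact lie_eq_zero_of_lie_eq_smul hs.symm (hnil v x)

end Field

namespace heisenberg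

theorem single_mem {i j : Fin 3} (hij : i < j) (c : ℝ) : Matrix.single i j c ∈ heisenberg := by
  intro k l hlk
  rw [Matrix.single_apply, if_neg]
  rintro ⟨rfl, rfl⟩
  exact absurd hij (not_lt.mpr hlk)

def e₁ : heisenberg := ⟨Matrix.single 0 1 1, single_mem (by decide) 1⟩

def e₂ : heisenberg := ⟨Matrix.single 1 2 1, single_mem (by decide) 1⟩

theorem coe_eta (x : heisenberg) : (x : Matrix (Fin 3) (Fin 3) ℝ) =
    !![0, (x : Matrix (Fin 3) (Fin 3) ℝ) 0 1, (x : Matrix (Fin 3) (Fin 3) ℝ) 0 2;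
       0, 0, (x : Matrix (Fin 3) (Fin 3) ℝ) 1 2; 0, 0, 0] := by
  ext i j
  fin_cases i <;> fin_cases j <;> first | exact x.2 _ _ (by decide) | rfl

theorem coe_lie (x y : heisenberg) : ((⁅x, y⁆ : heisenberg) : Matrix (Fin 3) (Fin 3) ℝ) =
    Matrix.single 0 2 ((x : Matrix (Fin 3) (Fin 3) ℝ) 0 1 * (y : Matrix (Fin 3) (Fin 3) ℝ) 1 2 -
      (x : Matrix (Fin 3) (Fin 3) ℝ) 1 2 * (y : Matrix (Fin 3) (Fin 3) ℝ) 0 1) := by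
  rw [LieSubalgebra.coe_bracket, Ring.lie_def, coe_eta x, coe_eta y]
  ext i j
  fin_cases i <;> fin_cases j <;> simp [mul_comm]

theorem lie_lie_eq_zero (x y z : heisenberg) : ⁅⁅x, y⁆, z⁆ = 0 := by
  ext1
  rw [coe_lie, coe_lie]
  simp

theorem exists_lie_eq_of_forall_lie_eq_zero {v : heisenberg}
    (hv : ∀ y : heisenberg, ⁅v, y⁆ = 0) : ∃ x y : heisenberg, ⁅x, y⁆ = v := by
  have h₁ := congrFun₂ (congrArg Subtype.val (hv e₁)) 0 2
  have h₂ := congrFun₂ (congrArg Subtype.val (hv e₂)) 0 2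
  rw [coe_lie] at h₁ h₂
  simp [e₁, e₂] at h₁ h₂
  refine ⟨(v : Matrix (Fin 3) (Fin 3) ℝ) 0 2 • e₁, e₂, ?_⟩
  ext1
  rw [coe_lie, coe_eta v]
  ext i j
  fin_cases i <;> fin_cases j <;> simp [e₁, e₂, h₁, h₂]

end heisenberg

/-- The Heisenberg Lie algebra `h₃(ℝ)` admits no involutive Lie algebra
automorphism whose `(-1)`-eigenspace is one-dimensional. -/
theorem heisenberg_no_involution_with_one_dimensional_neg_eigenspace :
    ¬ ∃ θ : ↥heisenberg →ₗ⁅ℝ⁆ ↥heisenberg,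
        (∀ x, θ (θ x) = x) ∧
        Module.finrank ℝ
          ↥(LinearMap.ker (θ.toLinearMap + LinearMap.id)) = 1 := by
  rintro ⟨θ, hθ, hrank⟩
  obtain ⟨⟨v, hv⟩, hv0, hspan⟩ := finrank_eq_one_iff'.mp hrank
  replace hv0 : v ≠ 0 := fun h => hv0 (Subtype.ext h)
  have hθv : θ v = -v := by simpa [add_eq_zero_iff_eq_neg] using hv
  have hneg : ∀ k, θ k = -k → ∃ c : ℝ, c • v = k := fun k hk => by
    obtain ⟨c, hc⟩ := hspan ⟨k, by simp [hk]⟩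
    exact ⟨c, congrArg Subtype.val hc⟩
  have hv_central := θ.lie_eq_zero_of_forall_neg_eq_smul hθ hθv hneg
    (fun x y => heisenberg.lie_lie_eq_zero x y y)
  have hcentral : ∀ k, θ k = -k → ∀ y : heisenberg, ⁅k, y⁆ = 0 := fun k hk y => by
    obtain ⟨c, rfl⟩ := hneg k hk
    rw [smul_lie, hv_central y, smul_zero]
  obtain ⟨x, y, rfl⟩ := heisenberg.exists_lie_eq_of_forall_lie_eq_zero hv_central
  have hθfix := θ.apply_lie_eq_lie_of_central hθ hcentral x y
  have : IsAddTorsionFree heisenberg := .of_isTorsionFree ℝ _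
  exact hv0 (self_eq_neg.mp (hθfix.symm.trans hθv))
end
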